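/- (Modulational expansion of the coefficient I.) Let g > 0, k₀ > 0, and χⱼ = (λⱼ, μⱼ) ∈ ℝ², j = 1,…,4, be fixed. Substitute k₁ = (k₀,0)+εχ₁, k₂ = (k₀,0)+εχ₂, k₃ = −((k₀,0)+εχ₃), k₄ = −((k₀,0)+εχ₄) into the coefficient I(k₁,k₂,k₃,k₄). Then, as ε → 0⁺, I = (√2 − 1)·(k₀³/(16π²))·( 1 + (3ε/(4k₀))(λ₁+λ₂+λ₃+λ₄) ) + O(ε²). -/

import Mathlib

open Asymptotics Filter Topology

/-- Euclidean norm on ℝ². -/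
noncomputable def norm2 (k : ℝ × ℝ) : ℝ := Real.sqrt (k.1 ^ 2 + k.2 ^ 2)

/-- Euclidean inner product on ℝ². -/
def dot (a b : ℝ × ℝ) : ℝ := a.1 * b.1 + a.2 * b.2

/-- Deep-water dispersion relation ω(k) = √(g‖k‖). -/
noncomputable def omg (g : ℝ) (k : ℝ × ℝ) : ℝ := Real.sqrt (g * norm2 k)

/-- ℓ_a^b = (‖a‖‖b‖ + a·b)/√(‖a‖‖b‖). -/
noncomputable def ell (a b : ℝ × ℝ) : ℝ :=
  (norm2 a * norm2 b + dot a b) / Real.sqrt (norm2 a * norm2 b)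

/-- The coefficient I of Proposition 4.3. -/
noncomputable def coefI (g : ℝ) (k₁ k₂ k₃ k₄ : ℝ × ℝ) : ℝ :=
  Real.sqrt g / (128 * Real.pi ^ 2) *
    (norm2 k₁ * norm2 k₂ * norm2 k₃ * norm2 k₄ * norm2 (k₁ + k₂) * norm2 (k₃ + k₄)) ^
      ((1 : ℝ) / 4) *
    (ell k₁ k₂ + ell (k₁ + k₂) (-k₁) + ell (k₁ + k₂) (-k₂)) *
    (ell k₃ k₄ + ell (k₃ + k₄) (-k₃) + ell (k₃ + k₄) (-k₄)) *
    (1 / (omg g k₁ + omg g k₂ + omg g (k₁ + k₂))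
      + 1 / (omg g k₃ + omg g k₄ + omg g (k₃ + k₄)))

/-!
Along the curve every wavevector stays away from `0`, so each factor of `I` is a `C²` function of
`ε` near `0`, and Taylor's theorem gives `I(ε) = I(0) + I'(0) ε + O(ε²)`; it remains to compute
the value and the derivative at `ε = 0` by the rules of calculus. Flipping the signs of `k₃, k₄`
does not change `I`, so all four wavevectors may be taken near `(k₀, 0)`.

The delicate factors are the `ℓ`. By Cauchy–Schwarz `ℓ ≥ 0`, and `ℓ_a^b = 0` when `a, b` are
antiparallel; so `ℓ_{k₁+k₂}^{-k₁}` and `ℓ_{k₁+k₂}^{-k₂}`, which vanish at `ε = 0`, have a minimum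
there and contribute nothing to first order. The parallel term is reduced to this case by
`ℓ_a^b + ℓ_a^{-b} = 2 √(‖a‖‖b‖)`.
-/

open Set Real

structure HasC2JetAtZero (f : ℝ → ℝ) (a b : ℝ) : Prop where
  contDiffAt : ContDiffAt ℝ 2 f 0
  apply_zero : f 0 = a
  hasDerivAt : HasDerivAt f b 0

namespace HasC2JetAtZero

variable {f g : ℝ → ℝ} {a b c d : ℝ}

theorem const (c : ℝ) : HasC2JetAtZero (fun _ => c) c 0 :=
  ⟨contDiffAt_const, rfl, hasDerivAt_const 0 c⟩

theorem affine (c v : ℝ) : HasC2JetAtZero (fun ε => c + ε * v) c v :=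
  ⟨by fun_prop, by simp, by simpa using (hasDerivAt_mul_const v).const_add c⟩

theorem add (hf : HasC2JetAtZero f a b) (hg : HasC2JetAtZero g c d) :
    HasC2JetAtZero (fun ε => f ε + g ε) (a + c) (b + d) :=
  ⟨hf.contDiffAt.add hg.contDiffAt, by simp [hf.apply_zero, hg.apply_zero],
    hf.hasDerivAt.add hg.hasDerivAt⟩

theorem sub (hf : HasC2JetAtZero f a b) (hg : HasC2JetAtZero g c d) :
    HasC2JetAtZero (fun ε => f ε - g ε) (a - c) (b - d) :=
  ⟨hf.contDiffAt.sub hg.contDiffAt, by simp [hf.apply_zero, hg.apply_zero],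
    hf.hasDerivAt.sub hg.hasDerivAt⟩

theorem mul (hf : HasC2JetAtZero f a b) (hg : HasC2JetAtZero g c d) :
    HasC2JetAtZero (fun ε => f ε * g ε) (a * c) (b * c + a * d) :=
  ⟨hf.contDiffAt.mul hg.contDiffAt, by simp [hf.apply_zero, hg.apply_zero], by
    simpa [hf.apply_zero, hg.apply_zero] using hf.hasDerivAt.fun_mul hg.hasDerivAt⟩

theorem one_div (hf : HasC2JetAtZero f a b) (ha : a ≠ 0) :
    HasC2JetAtZero (fun ε => 1 / f ε) (1 / a) (-b / a ^ 2) :=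
  ⟨contDiffAt_const.div hf.contDiffAt (hf.apply_zero ▸ ha), by simp [hf.apply_zero], by
    simpa [hf.apply_zero] using hf.hasDerivAt.fun_inv (hf.apply_zero ▸ ha)⟩

theorem sqrt (hf : HasC2JetAtZero f a b) (ha : a ≠ 0) :
    HasC2JetAtZero (fun ε => √(f ε)) (√a) (b / (2 * √a)) :=
  ⟨hf.contDiffAt.sqrt (hf.apply_zero ▸ ha), by simp [hf.apply_zero], by
    simpa [hf.apply_zero] using hf.hasDerivAt.sqrt (hf.apply_zero ▸ ha)⟩

theorem rpow_const (hf : HasC2JetAtZero f a b) (ha : a ≠ 0) (p : ℝ) :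
    HasC2JetAtZero (fun ε => f ε ^ p) (a ^ p) (b * p * a ^ (p - 1)) :=
  ⟨hf.contDiffAt.rpow_const_of_ne (hf.apply_zero ▸ ha), by simp [hf.apply_zero], by
    simpa [hf.apply_zero] using hf.hasDerivAt.rpow_const (p := p) (Or.inl (hf.apply_zero ▸ ha))⟩

theorem rpow_one_div_four (hf : HasC2JetAtZero f a b) (hc : 0 < c) (ha : a = c ^ 4) :
    HasC2JetAtZero (fun ε => f ε ^ ((1 : ℝ) / 4)) c (b / (4 * c ^ 3)) := by
  subst ha
  have hroot : (c ^ 4) ^ ((1 : ℝ) / 4) = c := by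
    rw [show (1 : ℝ) / 4 = ((4 : ℕ) : ℝ)⁻¹ by norm_num, pow_rpow_inv_natCast hc.le (by norm_num)]
  convert hf.rpow_const (by positivity) (1 / 4) using 1
  · exact hroot.symm
  · rw [rpow_sub_one (by positivity), hroot]
    field_simp

theorem of_nonneg (hf : ContDiffAt ℝ 2 f 0) (h0 : f 0 = 0) (hnn : ∀ ε, 0 ≤ f ε) :
    HasC2JetAtZero f 0 0 := by
  have hmin : IsLocalMin f 0 := Eventually.of_forall fun ε => by simpa [h0] using hnn ε
  have hderiv := (hf.differentiableAt (by norm_num)).hasDerivAt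
  rw [hmin.deriv_eq_zero] at hderiv
  exact ⟨hf, h0, hderiv⟩

theorem isBigO_sub (h : HasC2JetAtZero f a b) :
    (fun ε => f ε - (a + b * ε)) =O[𝓝[>] 0] fun ε => ε ^ 2 := by
  obtain ⟨u, hu, hfu⟩ := h.contDiffAt.contDiffOn (le_refl 2) (by norm_num)
  obtain ⟨δ, hδ, hδu⟩ := Metric.nhds_basis_closedBall.mem_iff.mp hu
  have hIcc : Icc 0 δ ⊆ u := fun x hx => hδu <| by
    rw [closedBall_eq_Icc]; exact ⟨by linarith [hx.1], by linarith [hx.2]⟩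
  obtain ⟨C, hC⟩ := exists_taylor_mean_remainder_bound hδ.le (n := 1) (hfu.mono hIcc)
  have htaylor (x : ℝ) : taylorWithinEval f 1 (Icc 0 δ) 0 x = a + b * x := by
    have hderiv : derivWithin f (Icc 0 δ) 0 = b :=
      h.hasDerivAt.hasDerivWithinAt.derivWithin (uniqueDiffOn_Icc hδ 0 ⟨le_rfl, hδ.le⟩)
    simp [taylor_within_apply, hderiv, h.apply_zero, mul_comm]
  refine Asymptotics.isBigO_iff.mpr ⟨C, ?_⟩
  filter_upwards [Ioc_mem_nhdsGT hδ] with x hx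
  have hbound := hC x ⟨hx.1.le, hx.2⟩
  rw [htaylor, sub_zero] at hbound
  simpa [abs_of_nonneg (sq_nonneg x)] using hbound

end HasC2JetAtZero

theorem norm2_neg (x : ℝ × ℝ) : norm2 (-x) = norm2 x := by
  simp [norm2]

theorem dot_neg_right (x y : ℝ × ℝ) : dot x (-y) = -dot x y := by
  simp only [dot, Prod.fst_neg, Prod.snd_neg]; ring

theorem ell_neg_neg (x y : ℝ × ℝ) : ell (-x) (-y) = ell x y := by
  simp [ell, norm2_neg, dot]

theorem omg_neg (g : ℝ) (x : ℝ × ℝ) : omg g (-x) = omg g x := by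
  simp [omg, norm2_neg]

theorem coefI_neg_neg (g : ℝ) (k₁ k₂ k₃ k₄ : ℝ × ℝ) :
    coefI g k₁ k₂ (-k₃) (-k₄) = coefI g k₁ k₂ k₃ k₄ := by
  simp only [coefI, ← neg_add, norm2_neg, ell_neg_neg, omg_neg]

theorem norm2_pos {p : ℝ × ℝ} (hp : p ≠ 0) : 0 < norm2 p := by
  refine sqrt_pos.mpr ?_
  obtain ⟨a, b⟩ := p
  have hab : a ≠ 0 ∨ b ≠ 0 := by
    by_contra! h
    exact hp (by simp [h.1, h.2])
  rcases hab with h | h <;> positivity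

theorem abs_dot_le_norm2_mul_norm2 (x y : ℝ × ℝ) : |dot x y| ≤ norm2 x * norm2 y := by
  rw [norm2, norm2, ← sqrt_mul (by positivity), ← sqrt_sq_eq_abs]
  refine sqrt_le_sqrt ?_
  simp only [dot]
  nlinarith [sq_nonneg (x.1 * y.2 - x.2 * y.1)]

theorem ell_nonneg (x y : ℝ × ℝ) : 0 ≤ ell x y :=
  div_nonneg (by linarith [neg_abs_le (dot x y), abs_dot_le_norm2_mul_norm2 x y]) (sqrt_nonneg _)

theorem ell_add_ell_neg (x y : ℝ × ℝ) : ell x y + ell x (-y) = 2 * √(norm2 x * norm2 y) := by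
  rw [ell, ell, norm2_neg, dot_neg_right, ← add_div, add_add_add_comm, add_neg_cancel, add_zero,
    ← two_mul, mul_div_assoc, div_sqrt]

theorem hasC2JetAtZero_norm2 {p : ℝ × ℝ} (hp : p ≠ 0) (v : ℝ × ℝ) :
    HasC2JetAtZero (fun ε => norm2 (p + ε • v)) (norm2 p) (dot p v / norm2 p) := by
  have h₁ := HasC2JetAtZero.affine p.1 v.1
  have h₂ := HasC2JetAtZero.affine p.2 v.2
  have hpos : p.1 * p.1 + p.2 * p.2 ≠ 0 := by
    simpa only [sq] using (sqrt_pos.mp (norm2_pos hp)).ne'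
  convert ((h₁.mul h₁).add (h₂.mul h₂)).sqrt hpos using 1
  · simp [norm2, sq]
  · simp [norm2, sq]
  · simp [norm2, dot, sq]; field_simp; ring

theorem contDiffAt_ell {p q : ℝ × ℝ} (hp : p ≠ 0) (hq : q ≠ 0) (v w : ℝ × ℝ) :
    ContDiffAt ℝ 2 (fun ε : ℝ => ell (p + ε • v) (q + ε • w)) 0 := by
  have hn := (hasC2JetAtZero_norm2 hp v).mul (hasC2JetAtZero_norm2 hq w)
  have hd : ContDiffAt ℝ 2 (fun ε : ℝ => dot (p + ε • v) (q + ε • w)) 0 := by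
    simp only [dot]; fun_prop
  have hpq := mul_pos (norm2_pos hp) (norm2_pos hq)
  have hs := hn.sqrt hpq.ne'
  exact (hn.contDiffAt.add hd).div hs.contDiffAt (by rw [hs.apply_zero]; positivity)

theorem hasC2JetAtZero_ell_of_eq_zero {p q : ℝ × ℝ} (hp : p ≠ 0) (hq : q ≠ 0) (hpq : ell p q = 0)
    (v w : ℝ × ℝ) : HasC2JetAtZero (fun ε => ell (p + ε • v) (q + ε • w)) 0 0 :=
  .of_nonneg (contDiffAt_ell hp hq v w) (by simpa using hpq) fun _ => ell_nonneg _ _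

theorem norm2_axis {c : ℝ} (hc : 0 ≤ c) : norm2 (c, 0) = c := by
  simp [norm2, sqrt_sq hc]

theorem ell_axis_neg {s t : ℝ} (hs : 0 ≤ s) (ht : 0 ≤ t) : ell (s, 0) (-t, 0) = 0 := by
  rw [ell, norm2_axis hs, show ((-t, 0) : ℝ × ℝ) = -(t, 0) by simp, norm2_neg, norm2_axis ht]
  simp [dot]

theorem axis_add_smul_add (c d ε : ℝ) (v w : ℝ × ℝ) :
    ((c, 0) + ε • v) + ((d, 0) + ε • w) = (c + d, 0) + ε • (v + w) :=
  Prod.ext (by simp; ring) (by simp)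

theorem neg_axis_add_smul (c ε : ℝ) (v : ℝ × ℝ) : -((c, 0) + ε • v) = (-c, 0) + ε • (-v) :=
  Prod.ext (by simp; ring) (by simp)

theorem hasC2JetAtZero_norm2_axis {c : ℝ} (hc : 0 < c) (v : ℝ × ℝ) :
    HasC2JetAtZero (fun ε => norm2 ((c, 0) + ε • v)) c v.1 := by
  convert hasC2JetAtZero_norm2 (p := (c, 0)) (by simp [hc.ne']) v using 1
  · rw [norm2_axis hc.le]
  · rw [norm2_axis hc.le, dot]; field_simp; ring

theorem hasC2JetAtZero_ell_axis {c : ℝ} (hc : 0 < c) (v w : ℝ × ℝ) :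
    HasC2JetAtZero (fun ε => ell ((c, 0) + ε • v) ((c, 0) + ε • w)) (2 * c) (v.1 + w.1) := by
  have hn := ((hasC2JetAtZero_norm2_axis hc v).mul (hasC2JetAtZero_norm2_axis hc w)).sqrt
    (by positivity)
  have hanti := hasC2JetAtZero_ell_of_eq_zero (p := (c, 0)) (q := (-c, 0)) (by simp [hc.ne'])
    (by simp [hc.ne']) (ell_axis_neg hc.le hc.le) v (-w)
  convert ((HasC2JetAtZero.const 2).mul hn).sub hanti using 1
  · funext ε
    rw [← neg_axis_add_smul, eq_sub_iff_add_eq, ell_add_ell_neg]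
  · rw [sqrt_mul_self hc.le]; ring
  · rw [sqrt_mul_self hc.le]; field_simp; ring

theorem hasC2JetAtZero_omg_axis {g c : ℝ} (hg : 0 < g) (hc : 0 < c) (v : ℝ × ℝ) :
    HasC2JetAtZero (fun ε => omg g ((c, 0) + ε • v)) (√g * √c) (√g * v.1 / (2 * √c)) := by
  convert ((HasC2JetAtZero.const g).mul (hasC2JetAtZero_norm2_axis hc v)).sqrt
    (by positivity) using 1
  · rfl
  · rw [sqrt_mul hg.le]
  · rw [sqrt_mul hg.le]
    have := mul_self_sqrt hg.le
    field_simp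
    linear_combination v.1 * this

noncomputable def ellSum (a b : ℝ × ℝ) : ℝ := ell a b + ell (a + b) (-a) + ell (a + b) (-b)

noncomputable def omgSum (g : ℝ) (a b : ℝ × ℝ) : ℝ := omg g a + omg g b + omg g (a + b)

theorem hasC2JetAtZero_ellSum {k₀ : ℝ} (hk₀ : 0 < k₀) (χ ψ : ℝ × ℝ) :
    HasC2JetAtZero (fun ε => ellSum ((k₀, 0) + ε • χ) ((k₀, 0) + ε • ψ)) (2 * k₀) (χ.1 + ψ.1) := by
  have hanti (v w : ℝ × ℝ) :
      HasC2JetAtZero (fun ε => ell ((k₀ + k₀, 0) + ε • v) ((-k₀, 0) + ε • w)) 0 0 :=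
    hasC2JetAtZero_ell_of_eq_zero (by simp; positivity) (by simp [hk₀.ne'])
      (ell_axis_neg (by positivity) hk₀.le) v w
  simp only [ellSum, axis_add_smul_add, neg_axis_add_smul]
  convert ((hasC2JetAtZero_ell_axis hk₀ χ ψ).add (hanti _ _)).add (hanti _ _) using 1 <;> ring

theorem hasC2JetAtZero_omgSum {g k₀ : ℝ} (hg : 0 < g) (hk₀ : 0 < k₀) (χ ψ : ℝ × ℝ) :
    HasC2JetAtZero (fun ε => omgSum g ((k₀, 0) + ε • χ) ((k₀, 0) + ε • ψ))
      (√g * √k₀ * (2 + √2)) (√g * √k₀ * (2 + √2) * ((χ.1 + ψ.1) / (4 * k₀))) := by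
  obtain ⟨r, hr, rfl⟩ : ∃ r, 0 < r ∧ k₀ = r ^ 2 :=
    ⟨√k₀, sqrt_pos.2 hk₀, (sq_sqrt hk₀.le).symm⟩
  have h2 := sq_sqrt zero_le_two
  simp only [omgSum, axis_add_smul_add]
  convert ((hasC2JetAtZero_omg_axis hg hk₀ χ).add (hasC2JetAtZero_omg_axis hg hk₀ ψ)).add
    (hasC2JetAtZero_omg_axis hg (c := r ^ 2 + r ^ 2) (by positivity) (χ + ψ)) using 1
  all_goals rw [show r ^ 2 + r ^ 2 = 2 * r ^ 2 by ring, sqrt_mul zero_le_two, sqrt_sq hr.le]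
  · ring
  · rw [Prod.fst_add]
    field_simp
    linear_combination 2 * (χ.1 + ψ.1) * h2

theorem hasC2JetAtZero_normProd_rpow {k₀ : ℝ} (hk₀ : 0 < k₀) (χ₁ χ₂ χ₃ χ₄ : ℝ × ℝ) :
    HasC2JetAtZero
      (fun ε => (norm2 ((k₀, 0) + ε • χ₁) * norm2 ((k₀, 0) + ε • χ₂) * norm2 ((k₀, 0) + ε • χ₃)
        * norm2 ((k₀, 0) + ε • χ₄) * norm2 ((k₀, 0) + ε • χ₁ + ((k₀, 0) + ε • χ₂))
        * norm2 ((k₀, 0) + ε • χ₃ + ((k₀, 0) + ε • χ₄))) ^ ((1 : ℝ) / 4))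
      (√2 * k₀ * √k₀) (√2 * k₀ * √k₀ * (3 * (χ₁.1 + χ₂.1 + χ₃.1 + χ₄.1) / (8 * k₀))) := by
  obtain ⟨r, hr, rfl⟩ : ∃ r, 0 < r ∧ k₀ = r ^ 2 :=
    ⟨√k₀, sqrt_pos.2 hk₀, (sq_sqrt hk₀.le).symm⟩
  have h2 := sq_sqrt zero_le_two
  have hN := hasC2JetAtZero_norm2_axis hk₀
  have hN₂ := hasC2JetAtZero_norm2_axis (c := r ^ 2 + r ^ 2) (by positivity)
  have hP := (((((hN χ₁).mul (hN χ₂)).mul (hN χ₃)).mul (hN χ₄)).mul (hN₂ (χ₁ + χ₂))).mul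
    (hN₂ (χ₃ + χ₄))
  rw [sqrt_sq hr.le]
  simp only [axis_add_smul_add]
  convert hP.rpow_one_div_four (c := √2 * r ^ 2 * r) (by positivity)
    (by linear_combination (-r ^ 12 * (√2 ^ 2 + 2)) * h2) using 1
  rw [Prod.fst_add, Prod.fst_add]
  field_simp
  linear_combination 12 * (χ₁.1 + χ₂.1 + χ₃.1 + χ₄.1) * (√2 ^ 2 + 2) * h2

theorem hasC2JetAtZero_coefI_modulational {g k₀ : ℝ} (hg : 0 < g) (hk₀ : 0 < k₀)
    (χ₁ χ₂ χ₃ χ₄ : ℝ × ℝ) :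
    HasC2JetAtZero
      (fun ε => coefI g ((k₀, 0) + ε • χ₁) ((k₀, 0) + ε • χ₂) ((k₀, 0) + ε • χ₃)
        ((k₀, 0) + ε • χ₄))
      ((√2 - 1) * (k₀ ^ 3 / (16 * π ^ 2)))
      ((√2 - 1) * (k₀ ^ 3 / (16 * π ^ 2)) * (3 * (χ₁.1 + χ₂.1 + χ₃.1 + χ₄.1) / (4 * k₀))) := by
  have hW₀ : √g * √k₀ * (2 + √2) ≠ 0 := by positivity
  have hJ := (((((HasC2JetAtZero.const (√g / (128 * π ^ 2))).mul
    (hasC2JetAtZero_normProd_rpow hk₀ χ₁ χ₂ χ₃ χ₄)).mul (hasC2JetAtZero_ellSum hk₀ χ₁ χ₂)).mul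
    (hasC2JetAtZero_ellSum hk₀ χ₃ χ₄)).mul
    (((hasC2JetAtZero_omgSum hg hk₀ χ₁ χ₂).one_div hW₀).add
      ((hasC2JetAtZero_omgSum hg hk₀ χ₃ χ₄).one_div hW₀)))
  obtain ⟨r, hr, rfl⟩ : ∃ r, 0 < r ∧ k₀ = r ^ 2 :=
    ⟨√k₀, sqrt_pos.2 hk₀, (sq_sqrt hk₀.le).symm⟩
  have h2 := sq_sqrt zero_le_two
  convert hJ using 1
  · rfl
  all_goals rw [sqrt_sq hr.le]; field_simp
  · linear_combination 128 * h2
  · linear_combination 3072 * √g * (χ₁.1 + χ₂.1 + χ₃.1 + χ₄.1) * h2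

/-- Modulational expansion of the coefficient I. -/
theorem coefI_modulational_expansion (g k₀ : ℝ) (hg : 0 < g) (hk₀ : 0 < k₀)
    (χ₁ χ₂ χ₃ χ₄ : ℝ × ℝ) :
    (fun ε : ℝ =>
        coefI g ((k₀, 0) + ε • χ₁) ((k₀, 0) + ε • χ₂)
            (-((k₀, 0) + ε • χ₃)) (-((k₀, 0) + ε • χ₄))
          - (Real.sqrt 2 - 1) * (k₀ ^ 3 / (16 * Real.pi ^ 2)) *
            (1 + 3 * ε / (4 * k₀) * (χ₁.1 + χ₂.1 + χ₃.1 + χ₄.1)))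
      =O[𝓝[>] (0 : ℝ)] fun ε => ε ^ 2 := by
  simp only [coefI_neg_neg]
  refine (hasC2JetAtZero_coefI_modulational hg hk₀ χ₁ χ₂ χ₃ χ₄).isBigO_sub.congr_left fun ε => ?_
  ring
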